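/- arXiv:2004.13415 — 4 statements merged into one kernel-verified Lean document; each statement's English description precedes it below -/
import Mathlib

section
/- For all n ≥ k ≥ 1, L(n,k) = (1/k!)·∑_{j=0}^k (-1)^{k-j}·C(k,j)·⟨j⟩_n, where ⟨j⟩_n = j(j+1)⋯(j+n-1) is the rising factorial. -/
open Finset

/-- The unsigned Lah numbers `L(n,k) = (n!/k!)·C(n-1,k-1)`. -/
def lah (n k : ℕ) : ℕ :=
  if k = 0 then (if n = 0 then 1 else 0)
  else (n - 1).choose (k - 1) * (n.factorial / k.factorial)

/-- The rising factorial `⟨j⟩_n = j(j+1)⋯(j+n-1)`. -/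
def rise (j n : ℕ) : ℕ := ∏ i ∈ Finset.range n, (j + i)

/-!
The alternating sum is the `k`-th forward difference at `0` of `j ↦ ⟨j⟩_n`. Since
`⟨j⟩_n = n! · C(j + n - 1, n)`, Vandermonde's identity expands it in the binomial basis as
`n! · ∑ᵢ C(n - 1, n - i) · C(j, i)`, and `Δᵏ` at `0` extracts the coefficient of `C(j, k)`.
-/

open fwdDiff

theorem rise_eq_ascFactorial (j n : ℕ) : rise j n = j.ascFactorial n :=
  (Nat.ascFactorial_eq_prod_range j n).symm

theorem rise_eq_sum_choose_mul_choose {n : ℕ} (hn : 0 < n) (j : ℕ) :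
    rise j n = n.factorial * ∑ i ∈ range (n + 1), j.choose i * (n - 1).choose (n - i) := by
  rw [rise_eq_ascFactorial, Nat.ascFactorial_eq_factorial_mul_choose',
    show j + n - 1 = j + (n - 1) by omega, Nat.add_choose_eq,
    Nat.sum_antidiagonal_eq_sum_range_succ (fun a b => j.choose a * (n - 1).choose b)]

theorem fwdDiff_iter_rise_zero {n k : ℕ} (hk : 1 ≤ k) (hkn : k ≤ n) :
    (Δ_[1])^[k] (fun j ↦ (rise j n : ℤ)) 0 = n.factorial * (n - 1).choose (k - 1) := by
  have hrise : (fun j ↦ (rise j n : ℤ)) = ∑ i ∈ range (n + 1),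
      (n.factorial * (n - 1).choose (n - i) : ℤ) • fun j ↦ (j.choose i : ℤ) := by
    ext j
    rw [rise_eq_sum_choose_mul_choose (by omega), mul_sum, Finset.sum_apply]
    push_cast
    exact sum_congr rfl fun i _ ↦ by simp only [Pi.smul_apply, smul_eq_mul]; ring
  rw [hrise, fwdDiff_iter_finsetSum]
  simp only [Finset.sum_apply, fwdDiff_iter_const_smul, Pi.smul_apply, fwdDiff_iter_choose_zero,
    smul_eq_mul, mul_ite, mul_one, mul_zero, sum_ite_eq, mem_range]
  rw [if_pos (by omega), Nat.choose_symm_of_eq_add (show n - 1 = (n - k) + (k - 1) by omega)]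

theorem lah_cast_eq {n k : ℕ} (hk : k ≠ 0) (hkn : k ≤ n) :
    (lah n k : ℚ) = (n - 1).choose (k - 1) * n.factorial / k.factorial := by
  rw [lah, if_neg hk, Nat.cast_mul, Nat.cast_div (Nat.factorial_dvd_factorial hkn)
    (by exact_mod_cast k.factorial_ne_zero), mul_div_assoc]

/-- For all `n ≥ k ≥ 1`,
`L(n,k) = (1/k!)·∑_{j=0}^k (-1)^{k-j}·C(k,j)·⟨j⟩_n`. -/
theorem lah_explicit_sum (n k : ℕ) (hk : 1 ≤ k) (hkn : k ≤ n) :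
    (lah n k : ℚ) = (1 / (k.factorial : ℚ)) *
      ∑ j ∈ Finset.range (k + 1),
        (-1 : ℚ) ^ (k - j) * (k.choose j : ℚ) * (rise j n : ℚ) := by
  have hdiff := congrArg (Int.cast : ℤ → ℚ) (fwdDiff_iter_rise_zero hk hkn)
  rw [fwdDiff_iter_eq_sum_shift] at hdiff
  push_cast [smul_eq_mul, zero_add, mul_one] at hdiff
  rw [hdiff, lah_cast_eq (by omega) hkn]
  ring
end

section
/- For n ≥ k, the connection identity (t|−α)_n = ∑_{k=0}^n ŵ_α(n,k)·(t|α)_k holds as an identity of polynomials in t, where (t|α)_m = ∏_{i=0}^{m-1}(t − iα) is the generalized falling factorial of increment α. -/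
/-! Multiplying `(X|α)_k` by `X + nα` gives `(X|α)_{k+1} + (n+k)α·(X|α)_k`, so by induction on `n`
the identity reduces to the Lah recurrence `L(n+1,k+1) = L(n,k) + (n+k+1)·L(n,k+1)`. In the closed
form `L(n,k) = C(n-1,k-1)·n!/k!` this is Pascal's rule combined with the absorption identity
`n·C(n-1,k-1) = k·C(n,k)`. -/

open Finset Polynomial

/-- The translated Whitney-Lah numbers `ŵ_α(n,k) = α^{n-k}·L(n,k)`. -/
def whitneyLah (α : ℚ) (n k : ℕ) : ℚ := α ^ (n - k) * (lah n k : ℚ)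

open scoped Nat

lemma lah_zero_right {n : ℕ} (hn : n ≠ 0) : lah n 0 = 0 := by
  simp [lah, hn]

lemma lah_eq_zero_of_lt {n k : ℕ} (hn : n ≠ 0) (hnk : n < k) : lah n k = 0 := by
  rw [lah, if_neg (by omega), Nat.choose_eq_zero_of_lt (by omega), zero_mul]

lemma cast_lah {n k : ℕ} (hn : n ≠ 0) (hk : k ≠ 0) :
    (lah n k : ℚ) = (n - 1).choose (k - 1) * n ! / k ! := by
  rcases le_or_gt k n with hkn | hnk
  · rw [lah, if_neg hk, Nat.cast_mul, Nat.cast_div (Nat.factorial_dvd_factorial hkn)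
      (by positivity), mul_div_assoc]
  · rw [lah_eq_zero_of_lt hn hnk, Nat.choose_eq_zero_of_lt (by omega)]
    simp

/-- Pascal-type recurrence for the Lah numbers; `n ≠ 0` excludes the junk value `lah 0 1 = 1`. -/
theorem lah_succ_succ {n : ℕ} (hn : n ≠ 0) (k : ℕ) :
    (lah (n + 1) (k + 1) : ℚ) = lah n k + (n + k + 1) * lah n (k + 1) := by
  obtain ⟨p, rfl⟩ : ∃ p, n = p + 1 := ⟨n - 1, by omega⟩
  rcases k with _ | m
  · simp [cast_lah, lah_zero_right, Nat.factorial_succ]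
  · simp only [cast_lah (Nat.succ_ne_zero _) (Nat.succ_ne_zero _)]
    have pascal : ((p + 1).choose (m + 1) : ℚ) = p.choose m + p.choose (m + 1) := by
      exact_mod_cast Nat.choose_succ_succ p m
    have absorb : ((p + 1 : ℕ) : ℚ) * p.choose m = (p + 1).choose (m + 1) * (m + 1) := by
      exact_mod_cast Nat.add_one_mul_choose_eq p m
    simp only [Nat.factorial_succ, Nat.cast_mul]
    field_simp
    push_cast at absorb ⊢
    linear_combination (↑p + ↑m + 3 : ℚ) * pascal + absorb

theorem whitneyLah_succ_succ (α : ℚ) {n : ℕ} (hn : n ≠ 0) (k : ℕ) :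
    whitneyLah α (n + 1) (k + 1) =
      whitneyLah α n k + α * (n + k + 1) * whitneyLah α n (k + 1) := by
  simp only [whitneyLah, lah_succ_succ hn, Nat.add_sub_add_right]
  rcases lt_or_ge k n with hkn | hnk
  · rw [show n - k = n - (k + 1) + 1 by omega, pow_succ]
    ring
  · rw [lah_eq_zero_of_lt (k := k + 1) hn (by omega)]
    ring

/-- The generalized falling factorial `(X|α)_k` of the paper. -/
noncomputable def fallingFactorialWithStep {R : Type*} [CommRing R] (α : R) (k : ℕ) : R[X] :=
  ∏ i ∈ range k, (X - C (α * i))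

theorem fallingFactorialWithStep_mul_X_add_C {R : Type*} [CommRing R] (α : R) (n k : ℕ) :
    fallingFactorialWithStep α k * (X + C (α * n)) =
      fallingFactorialWithStep α (k + 1) + C (α * (n + k)) * fallingFactorialWithStep α k := by
  simp only [fallingFactorialWithStep, prod_range_succ, map_mul, map_add]
  ring

theorem sum_whitneyLah_mul_X_add_C (α : ℚ) {n : ℕ} (hn : n ≠ 0) :
    (∑ k ∈ range (n + 1), C (whitneyLah α n k) * fallingFactorialWithStep α k) *
        (X + C (α * n)) =
      ∑ k ∈ range (n + 2), C (whitneyLah α (n + 1) k) * fallingFactorialWithStep α k := by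
  have hw0 : whitneyLah α n 0 = 0 := by simp [whitneyLah, lah_zero_right hn]
  have hw_top : whitneyLah α n (n + 1) = 0 := by
    simp [whitneyLah, lah_eq_zero_of_lt hn (Nat.lt_succ_self n)]
  have hw'0 : whitneyLah α (n + 1) 0 = 0 := by simp [whitneyLah, lah_zero_right]
  have shift :
      ∑ k ∈ range (n + 1), C (α * (n + k) * whitneyLah α n k) * fallingFactorialWithStep α k =
        ∑ k ∈ range (n + 1),
          C (α * (n + (k + 1 : ℕ)) * whitneyLah α n (k + 1)) *
            fallingFactorialWithStep α (k + 1) := by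
    rw [sum_range_succ', sum_range_succ _ n, hw0, hw_top]
    simp
  calc _ = ∑ k ∈ range (n + 1), C (whitneyLah α n k) * fallingFactorialWithStep α (k + 1) +
        ∑ k ∈ range (n + 1), C (α * (n + k) * whitneyLah α n k) * fallingFactorialWithStep α k := by
        rw [sum_mul, ← sum_add_distrib]
        refine sum_congr rfl fun k _ => ?_
        rw [mul_assoc, fallingFactorialWithStep_mul_X_add_C]
        simp only [map_mul]
        ring
    _ = ∑ k ∈ range (n + 1),
          C (whitneyLah α (n + 1) (k + 1)) * fallingFactorialWithStep α (k + 1) := by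
        rw [shift, ← sum_add_distrib]
        refine sum_congr rfl fun k _ => ?_
        rw [whitneyLah_succ_succ α hn, map_add, add_mul, Nat.cast_succ, add_assoc]
    _ = _ := by
        rw [sum_range_succ' _ (n + 1), hw'0, map_zero, zero_mul, add_zero]

/-- The connection identity
`(t|−α)_n = ∑_{k=0}^n ŵ_α(n,k)·(t|α)_k` as an identity of polynomials in `t`,
where `(t|α)_m = ∏_{i=0}^{m-1}(t − iα)`, so `(t|−α)_n = ∏_{i=0}^{n-1}(t + iα)`. -/
theorem whitneyLah_connection (α : ℚ) (n : ℕ) :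
    (∏ i ∈ Finset.range n, (Polynomial.X + Polynomial.C (α * i)) : Polynomial ℚ) =
      ∑ k ∈ Finset.range (n + 1), Polynomial.C (whitneyLah α n k) *
        ∏ i ∈ Finset.range k, (Polynomial.X - Polynomial.C (α * i)) := by
  change _ = ∑ k ∈ range (n + 1), C (whitneyLah α n k) * fallingFactorialWithStep α k
  induction n with
  | zero => simp [whitneyLah, lah, fallingFactorialWithStep]
  | succ n ih =>
    rcases eq_or_ne n 0 with rfl | hn
    · simp [whitneyLah, lah, fallingFactorialWithStep, sum_range_succ]
    · rw [prod_range_succ, ih, sum_whitneyLah_mul_X_add_C α hn]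
end

section
/- For all k ≥ 2 and n ≥ k − 1, ∑_{j=1}^k (−1)^j · L(k,j) · (n+j)! = (−1)^k · n!·(n+1)!/(n−k+1)!, where L(k,j) are the unsigned Lah numbers. -/
/-!
Since `L(k,j)·j! = C(k−1,k−j)·k!` and `(n+j)! = C(n+j,j)·j!·n!`, the sum equals `k!·n!` times
`∑ⱼ C(k−1,k−j)·(−1)^j C(n+j,j) = ∑ⱼ C(k−1,k−j)·C(−n−1,j)`, which by Chu–Vandermonde is
`C(k−n−2,k) = (−1)^k C(n+1,k)` (upper negation). Finally `k!·C(n+1,k) = (n+1)!/(n+1−k)!`.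
-/

open Finset

theorem Ring.choose_neg_eq_neg_one_pow_mul {R : Type*} [Ring R] [BinomialRing R] (r : R)
    (j : ℕ) : Ring.choose (-r) j = (-1) ^ j * Ring.choose (r + j - 1) j := by
  rw [Ring.choose_neg, Units.smul_def, Int.coe_negOnePow_natCast, zsmul_eq_mul, Int.cast_pow,
    Int.cast_neg, Int.cast_one]

theorem Ring.choose_self_sub_natCast_sub_two {R : Type*} [Ring R] [BinomialRing R] (n k : ℕ) :
    Ring.choose ((k : R) - n - 2) k = (-1) ^ k * (n + 1).choose k := by
  rw [show (k : R) - n - 2 = -(n + 2 - k) by abel, Ring.choose_neg_eq_neg_one_pow_mul,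
    show (n : R) + 2 - k + k - 1 = (n + 1 : ℕ) by
      push_cast; rw [sub_add_cancel, add_sub_assoc]; norm_num, Ring.choose_natCast]

theorem sum_neg_one_pow_mul_choose_mul_add_choose (m n k : ℕ) :
    ∑ j ∈ range (k + 1), (-1 : ℤ) ^ j * m.choose (k - j) * (n + j).choose j =
      Ring.choose ((m : ℤ) - n - 1) k := by
  rw [show (m : ℤ) - n - 1 = -(n + 1 : ℕ) + m by push_cast; ring,
    Ring.add_choose_eq k (Commute.all _ _), Nat.sum_antidiagonal_eq_sum_range_succ
      (fun a b => Ring.choose (-((n + 1 : ℕ) : ℤ)) a * Ring.choose (m : ℤ) b)]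
  refine sum_congr rfl fun j _ => ?_
  rw [Ring.choose_neg_eq_neg_one_pow_mul, Ring.choose_natCast,
    show ((n + 1 : ℕ) : ℤ) + j - 1 = (n + j : ℕ) by push_cast; ring, Ring.choose_natCast]
  ring

theorem sum_neg_one_pow_mul_choose_pred_mul_add_choose {k : ℕ} (hk : k ≠ 0) (n : ℕ) :
    ∑ j ∈ range (k + 1), (-1 : ℤ) ^ j * (k - 1).choose (k - j) * (n + j).choose j =
      (-1) ^ k * (n + 1).choose k := by
  rw [sum_neg_one_pow_mul_choose_mul_add_choose, Nat.cast_pred (Nat.pos_of_ne_zero hk),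
    ← Ring.choose_self_sub_natCast_sub_two]
  ring_nf

-- `C(k−1,k−j)` rather than `C(k−1,j−1)`: with truncated subtraction only the former vanishes
-- at `j = 0`, matching `lah k 0 = 0`.
theorem lah_mul_factorial {k j : ℕ} (hk : k ≠ 0) (hjk : j ≤ k) :
    lah k j * j.factorial = (k - 1).choose (k - j) * k.factorial := by
  obtain rfl | hj := eq_or_ne j 0
  · simp [lah, hk, Nat.choose_eq_zero_of_lt (by omega : k - 1 < k)]
  · rw [lah, if_neg hj, mul_assoc, Nat.div_mul_cancel (Nat.factorial_dvd_factorial hjk),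
      ← Nat.choose_symm (by omega : j - 1 ≤ k - 1), (by omega : k - 1 - (j - 1) = k - j)]

/-- For all `k ≥ 2` and `n ≥ k − 1`,
`∑_{j=1}^k (−1)^j · L(k,j) · (n+j)! = (−1)^k · n!·(n+1)!/(n−k+1)!`. -/
theorem lah_alternating_sum (k n : ℕ) (hk : 2 ≤ k) (hn : k - 1 ≤ n) :
    ∑ j ∈ Finset.Icc 1 k, (-1 : ℚ) ^ j * (lah k j : ℚ) * ((n + j).factorial : ℚ) =
      (-1 : ℚ) ^ k * (n.factorial : ℚ) * ((n + 1).factorial : ℚ) /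
        ((n + 1 - k).factorial : ℚ) := by
  have hk0 : k ≠ 0 := by omega
  have hterm : ∀ j ≤ k, (-1 : ℚ) ^ j * lah k j * (n + j).factorial =
      k.factorial * n.factorial * ((-1) ^ j * (k - 1).choose (k - j) * (n + j).choose j) := by
    intro j hj
    have hlah := congrArg (Nat.cast (R := ℚ)) (lah_mul_factorial hk0 hj)
    rw [← Nat.add_choose_mul_factorial_mul_factorial]
    push_cast at hlah ⊢
    linear_combination (-1) ^ j * (n.factorial : ℚ) * (n + j).choose j * hlah
  have hcore := congrArg (Int.cast (R := ℚ))
    (sum_neg_one_pow_mul_choose_pred_mul_add_choose hk0 n)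
  push_cast at hcore
  calc ∑ j ∈ Icc 1 k, (-1 : ℚ) ^ j * lah k j * (n + j).factorial
      = ∑ j ∈ range (k + 1), (-1 : ℚ) ^ j * lah k j * (n + j).factorial := by
        rw [range_eq_Ico, sum_eq_sum_Ico_succ_bot (by omega), Ico_add_one_right_eq_Icc]
        simp [lah, hk0]
    _ = k.factorial * n.factorial * ((-1) ^ k * (n + 1).choose k) := by
        rw [sum_congr rfl fun j hj => hterm j (Nat.lt_succ_iff.mp (mem_range.mp hj)), ← mul_sum,
          hcore]
    _ = _ := by
        rw [← Nat.choose_mul_factorial_mul_factorial (by omega : k ≤ n + 1)]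
        push_cast
        field_simp
end

section
/- The q-Lah numbers satisfy the recurrence L_q(n+1,k) = q^{n+k−1}·L_q(n,k−1) + [n+k]_q·L_q(n,k). -/
open Finset

/-- We work over the field `ℚ(q)` of rational functions, with `q` the generic
(transcendental) parameter. -/
noncomputable def q : RatFunc ℚ := RatFunc.X

/-- The `q`-integer `[m]_q = 1 + q + ⋯ + q^{m−1}`. -/
noncomputable def qint (m : ℕ) : RatFunc ℚ := ∑ i ∈ Finset.range m, q ^ i

/-- The `q`-factorial `[m]_q! = ∏_{i=1}^m [i]_q`. -/
noncomputable def qfact (m : ℕ) : RatFunc ℚ := ∏ i ∈ Finset.Icc 1 m, qint i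

/-- The Gaussian binomial coefficient `C(m,k)_q = ∏_{j=1}^k (q^{m−j+1}−1)/(q^j−1)`. -/
noncomputable def qbinom (m k : ℕ) : RatFunc ℚ :=
  ∏ j ∈ Finset.Icc 1 k, (q ^ (m + 1 - j) - 1) / (q ^ j - 1)

/-- The `q`-Lah numbers `L_q(n,k) = C(n,k)_q · ([n−1]_q!/[k−1]_q!) · q^{k(k−1)}`
for `n ≥ k ≥ 1`, with `L_q(0,0) = 1` and `L_q(n,k) = 0` for `k > n` or `k = 0 < n`. -/
noncomputable def qLah (n k : ℕ) : RatFunc ℚ :=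
  if k = 0 then (if n = 0 then 1 else 0)
  else qbinom n k * (qfact (n - 1) / qfact (k - 1)) * q ^ (k * (k - 1))

/-!
Write `[m]` for `qint m` and `C(n,k)` for `qbinom n k`. When `2 ≤ k ≤ n + 1`, dividing the
recurrence by `[n−1]!/[k−2]! · q^{(k−1)(k−2)}` leaves an identity between Gaussian
binomials. Both `C(n+1,k+1)` and `C(n,k+1)` are multiples of `C(n,k)`:
`[k+1] C(n+1,k+1) = [n+1] C(n,k)` and `[k+1] C(n,k+1) = [n−k] C(n,k)`. With `n = j + d` the
identity then becomes `[j+d][j+d+1] = q^d [j][j+1] + [2j+d+1][d]`, the `q`-analogue of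
`(j+d)(j+d+1) = j(j+1) + (2j+d+1)d`. For `k > n + 1` every term vanishes, because the
Gaussian binomial contains the factor `q^0 − 1`; the case `k = 1` is the `q`-factorial recursion.
-/

open Polynomial

lemma q_pow_sub_one_ne_zero {j : ℕ} (hj : j ≠ 0) : q ^ j - 1 ≠ 0 := by
  have h : q ^ j - 1 = algebraMap ℚ[X] (RatFunc ℚ) (X ^ j - C 1) := by
    simp [q, RatFunc.algebraMap_X]
  rw [h, Ne, map_eq_zero_iff _ (IsFractionRing.injective ℚ[X] (RatFunc ℚ))]
  exact X_pow_sub_C_ne_zero (Nat.pos_of_ne_zero hj) 1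

lemma q_sub_one_ne_zero : q - 1 ≠ 0 := by
  simpa using q_pow_sub_one_ne_zero one_ne_zero

lemma qint_eq_div (m : ℕ) : qint m = (q ^ m - 1) / (q - 1) := by
  rw [eq_div_iff q_sub_one_ne_zero, qint, geom_sum_mul]

lemma qint_ne_zero {m : ℕ} (hm : m ≠ 0) : qint m ≠ 0 := by
  rw [qint_eq_div]
  exact div_ne_zero (q_pow_sub_one_ne_zero hm) q_sub_one_ne_zero

lemma qint_add_mul_qint_add_succ (j d : ℕ) :
    qint (j + d) * qint (j + d + 1) =
      q ^ d * qint j * qint (j + 1) + qint (2 * j + d + 1) * qint d := by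
  simp only [qint_eq_div]
  field_simp [q_sub_one_ne_zero]
  ring

lemma qfact_succ (m : ℕ) : qfact (m + 1) = qint (m + 1) * qfact m := by
  rw [qfact, qfact, prod_Icc_succ_top (by omega), mul_comm]

lemma qfact_ne_zero (m : ℕ) : qfact m ≠ 0 :=
  prod_ne_zero_iff.mpr fun i hi => qint_ne_zero (by grind)

lemma qbinom_eq_zero_of_lt {n k : ℕ} (h : n < k) : qbinom n k = 0 :=
  prod_eq_zero (i := n + 1) (mem_Icc.mpr ⟨by omega, h⟩) (by simp)

lemma qbinom_succ_right_mul (n k : ℕ) :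
    qbinom n (k + 1) * qint (k + 1) = qbinom n k * qint (n - k) := by
  rw [qbinom, prod_Icc_succ_top (by omega), ← qbinom, Nat.add_sub_add_right, qint_eq_div,
    qint_eq_div]
  field_simp [q_sub_one_ne_zero, q_pow_sub_one_ne_zero k.succ_ne_zero]

lemma qbinom_succ_succ_mul (n k : ℕ) :
    qbinom (n + 1) (k + 1) * qint (k + 1) = qbinom n k * qint (n + 1) := by
  induction k with
  | zero => simp [qbinom, qint_eq_div, q_sub_one_ne_zero]
  | succ k ih =>
    refine mul_right_cancel₀ (qint_ne_zero k.succ_ne_zero) ?_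
    have hleft := qbinom_succ_right_mul (n + 1) (k + 1)
    have hright := qbinom_succ_right_mul n k
    rw [Nat.add_sub_add_right] at hleft
    linear_combination qint (k + 1) * hleft + qint (n - k) * ih - qint (n + 1) * hright

lemma qint_mul_qbinom_add_succ_succ (j d : ℕ) :
    qint (j + d) * q ^ j * qbinom (j + d + 1) (j + 1) =
      q ^ (j + d) * qint j * qbinom (j + d) j +
        q ^ j * qint (2 * j + d + 1) * qbinom (j + d) (j + 1) := by
  refine mul_right_cancel₀ (qint_ne_zero j.succ_ne_zero) ?_
  have hnum := qbinom_succ_succ_mul (j + d) j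
  have hden := qbinom_succ_right_mul (j + d) j
  rw [Nat.add_sub_cancel_left] at hden
  linear_combination qint (j + d) * q ^ j * hnum - q ^ j * qint (2 * j + d + 1) * hden +
    q ^ j * qbinom (j + d) j * qint_add_mul_qint_add_succ j d

lemma qLah_succ_right (n k : ℕ) :
    qLah n (k + 1) = qbinom n (k + 1) * (qfact (n - 1) / qfact k) * q ^ ((k + 1) * k) := by
  simp [qLah]

lemma qLah_eq_zero_of_lt {n k : ℕ} (h : n < k) : qLah n k = 0 := by
  obtain ⟨k, rfl⟩ : ∃ i, k = i + 1 := ⟨k - 1, by omega⟩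
  rw [qLah_succ_right, qbinom_eq_zero_of_lt h, zero_mul, zero_mul]

lemma qbinom_one (n : ℕ) : qbinom n 1 = qint n := by
  simp [qbinom, qint_eq_div]

lemma qLah_one (n : ℕ) : qLah n 1 = qint n * qfact (n - 1) := by
  simp [qLah_succ_right n 0, qbinom_one, qfact]

/-- The `q`-Lah numbers satisfy the recurrence
`L_q(n+1,k) = q^{n+k−1}·L_q(n,k−1) + [n+k]_q·L_q(n,k)` (for `k ≥ 1`, the term
`L_q(n,k−1)` meaning `0` when `k = 0`). -/
theorem qLah_recurrence (n k : ℕ) (hk : 1 ≤ k) :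
    qLah (n + 1) k = q ^ (n + k - 1) * qLah n (k - 1) + qint (n + k) * qLah n k := by
  rcases lt_or_ge (n + 1) k with hlt | hle
  · rw [qLah_eq_zero_of_lt hlt, qLah_eq_zero_of_lt (by omega : n < k - 1),
      qLah_eq_zero_of_lt (by omega : n < k)]
    ring
  obtain rfl | ⟨i, rfl⟩ : k = 1 ∨ ∃ i, k = i + 1 + 1 := by
    rcases k with _ | _ | i <;> simp_all
  · rw [qLah_one, qLah_one]
    rcases n with _ | m
    · simp [qLah, qint, qfact]
    · simp [qLah, qfact_succ]
  obtain ⟨d, rfl⟩ : ∃ d, n = i + 1 + d := ⟨n - (i + 1), by omega⟩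
  simp only [qLah_succ_right, Nat.add_sub_cancel]
  have hfact : qfact (i + 1 + d) = qint (i + 1 + d) * qfact (i + d) := by
    rw [show i + 1 + d = i + d + 1 by ring, qfact_succ]
  rw [show i + 1 + d - 1 = i + d by omega,
    show i + 1 + d + (i + 1 + 1) - 1 = i + 1 + d + (i + 1) by omega,
    show i + 1 + d + (i + 1 + 1) = 2 * (i + 1) + d + 1 by ring, hfact, qfact_succ i]
  have key := qint_mul_qbinom_add_succ_succ (i + 1) d
  field_simp [qfact_ne_zero, qint_ne_zero]
  linear_combination q ^ ((i + 1) * i) * q ^ (i + 1) * key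
end
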